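/- arXiv:1108.5854 — 3 statements merged into one kernel-verified Lean document; each statement's English description precedes it below -/
import Mathlib

section
/- Fix a real m and work on the open set {λ > 0} in ℝ⁶ with coordinates (x, y, u, p, q, λ). Define D_x = ∂_x + p∂_u + λ∂_p + λ^m∂_q and D_y = ∂_y + q∂_u + λ^m∂_p + (m²/(2m−1))λ^{2m−1}∂_q (assume m ≠ 1/2). Then [D_y, D_x] = 0, and ξ = D_y − m·λ^{m−1}·D_x satisfies [∂_λ, ξ] = −m(m−1)λ^{m−2}·D_x, so ξ is a Cauchy characteristic of the distribution spanned by D_x, D_y, ∂_λ. -/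
/-!
The coefficients involve λ only, and `D_x`, `D_y` have no `∂_λ` component, so `[D_y, D_x]` reduces
to `D_y(p) - D_x(q) = λ^m - λ^m` in the `∂_u` slot. The constant `m²/(2m-1)` is chosen so that
`∂_λ D_y = mλ^{m-1} ∂_λ D_x`; hence in `[∂_λ, ξ]` only the derivative of the coefficient
`f = mλ^{m-1}` survives. The Leibniz rule for `[Z, D_y - f • D_x]` reduces the brackets of `ξ`
with `D_x` and `D_y` to `[D_y, D_x] = 0`, because `D_x f = D_y f = 0`.
-/

/-- Lie bracket of vector fields on ℝⁿ. -/
noncomputable def lie {n : ℕ} (X Y : (Fin n → ℝ) → (Fin n → ℝ)) :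
    (Fin n → ℝ) → (Fin n → ℝ) :=
  fun p => fderiv ℝ Y p (X p) - fderiv ℝ X p (Y p)

/-- Coordinates on ℝ⁶: (x, y, u, p, q, λ) = (P 0, ..., P 5); λ^s is the real power. -/
noncomputable def DxM (m : ℝ) : (Fin 6 → ℝ) → (Fin 6 → ℝ) :=
  fun P => ![1, 0, P 3, P 5, (P 5) ^ m, 0]

noncomputable def DyM (m : ℝ) : (Fin 6 → ℝ) → (Fin 6 → ℝ) :=
  fun P => ![0, 1, P 4, (P 5) ^ m, (m ^ 2 / (2 * m - 1)) * (P 5) ^ (2 * m - 1), 0]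

noncomputable def xiM (m : ℝ) : (Fin 6 → ℝ) → (Fin 6 → ℝ) :=
  fun P => DyM m P - (m * (P 5) ^ (m - 1)) • DxM m P

noncomputable def dLam : (Fin 6 → ℝ) → (Fin 6 → ℝ) :=
  fun _ => ![0, 0, 0, 0, 0, 1]

open VectorField ContinuousLinearMap

theorem VectorField.lieBracket_sub_smul_right {𝕜 E : Type*} [NontriviallyNormedField 𝕜]
    [NormedAddCommGroup E] [NormedSpace 𝕜 E] {V W U : E → E} {f : E → 𝕜} {x : E}
    (hW : DifferentiableAt 𝕜 W x) (hf : DifferentiableAt 𝕜 f x) (hU : DifferentiableAt 𝕜 U x) :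
    lieBracket 𝕜 V (fun y ↦ W y - f y • U y) x =
      lieBracket 𝕜 V W x - (fderiv 𝕜 f x (V x) • U x + f x • lieBracket 𝕜 V U x) := by
  rw [← lieBracket_smul_right hf hU]
  simp only [lieBracket]
  rw [fderiv_fun_sub (g := fun y ↦ f y • U y) hW (hf.smul hU), sub_apply, map_sub]
  abel

theorem VectorField.lieBracket_const_left {𝕜 E : Type*} [NontriviallyNormedField 𝕜]
    [NormedAddCommGroup E] [NormedSpace 𝕜 E] (v : E) (W : E → E) (x : E) :
    lieBracket 𝕜 (fun _ ↦ v) W x = fderiv 𝕜 W x v := by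
  simp [lieBracket]

theorem lie_eq_lieBracket {n : ℕ} (X Y : (Fin n → ℝ) → (Fin n → ℝ)) :
    lie X Y = lieBracket ℝ X Y := rfl

theorem lie_swap {n : ℕ} (X Y : (Fin n → ℝ) → (Fin n → ℝ)) (p : Fin n → ℝ) :
    lie X Y p = -lie Y X p :=
  lieBracket_swap

noncomputable def xiCoeff (m : ℝ) (Q : Fin 6 → ℝ) : ℝ := m * Q 5 ^ (m - 1)

section

variable {m : ℝ} {P : Fin 6 → ℝ}

theorem xiM_eq : xiM m = fun Q ↦ DyM m Q - xiCoeff m Q • DxM m Q := rfl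

theorem hasFDerivAt_DxM (hP : P 5 ≠ 0) :
    HasFDerivAt (DxM m)
      (pi ![0, 0, proj 3, proj 5, (m * P 5 ^ (m - 1)) • proj 5, 0] : (Fin 6 → ℝ) →L[ℝ] Fin 6 → ℝ)
      P := by
  refine hasFDerivAt_pi'' fun i ↦ ?_
  rw [proj_pi]
  fin_cases i <;> simp only [DxM, Fin.isValue, Fin.zero_eta, Fin.mk_one, Fin.reduceFinMk,
    Matrix.cons_val_zero, Matrix.cons_val_one, Matrix.cons_val]
  all_goals first
    | exact hasFDerivAt_const _ _
    | exact hasFDerivAt_apply _ _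
    | exact (hasFDerivAt_apply 5 P).rpow_const (Or.inl hP)

theorem hasFDerivAt_DyM (hP : P 5 ≠ 0) :
    HasFDerivAt (DyM m)
      (pi ![0, 0, proj 4, (m * P 5 ^ (m - 1)) • proj 5,
        (m ^ 2 / (2 * m - 1)) • ((2 * m - 1) * P 5 ^ (2 * m - 1 - 1)) • proj 5, 0] :
        (Fin 6 → ℝ) →L[ℝ] Fin 6 → ℝ) P := by
  refine hasFDerivAt_pi'' fun i ↦ ?_
  rw [proj_pi]
  fin_cases i <;> simp only [DyM, Fin.isValue, Fin.zero_eta, Fin.mk_one, Fin.reduceFinMk,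
    Matrix.cons_val_zero, Matrix.cons_val_one, Matrix.cons_val]
  all_goals first
    | exact hasFDerivAt_const _ _
    | exact hasFDerivAt_apply _ _
    | exact (hasFDerivAt_apply 5 P).rpow_const (Or.inl hP)
    | exact ((hasFDerivAt_apply 5 P).rpow_const (Or.inl hP)).const_mul _

theorem hasFDerivAt_xiCoeff (hP : P 5 ≠ 0) :
    HasFDerivAt (xiCoeff m)
      (m • ((m - 1) * P 5 ^ (m - 1 - 1)) • proj (5 : Fin 6) : (Fin 6 → ℝ) →L[ℝ] ℝ) P :=
  ((hasFDerivAt_apply 5 P).rpow_const (Or.inl hP)).const_mul m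

theorem fderiv_xiCoeff_apply (hP : P 5 ≠ 0) (v : Fin 6 → ℝ) :
    fderiv ℝ (xiCoeff m) P v = m * (m - 1) * P 5 ^ (m - 2) * v 5 := by
  rw [(hasFDerivAt_xiCoeff hP).fderiv]
  simp only [smul_apply, proj_apply, smul_eq_mul]
  rw [show m - 1 - 1 = m - 2 by ring]
  ring

theorem lie_xiM_right (hP : P 5 ≠ 0) (Z : (Fin 6 → ℝ) → (Fin 6 → ℝ)) :
    lie Z (xiM m) P =
      lie Z (DyM m) P - (fderiv ℝ (xiCoeff m) P (Z P) • DxM m P + xiCoeff m P • lie Z (DxM m) P) :=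
  lieBracket_sub_smul_right (hasFDerivAt_DyM hP).differentiableAt
    (hasFDerivAt_xiCoeff hP).differentiableAt (hasFDerivAt_DxM hP).differentiableAt

theorem lie_DyM_DxM (hP : P 5 ≠ 0) : lie (DyM m) (DxM m) P = 0 := by
  rw [lie, (hasFDerivAt_DxM hP).fderiv, (hasFDerivAt_DyM hP).fderiv]
  ext i
  fin_cases i <;> simp [DxM, DyM]

theorem lie_dLam_DyM (hP : 0 < P 5) (hm : m ≠ 1 / 2) :
    lie dLam (DyM m) P = xiCoeff m P • lie dLam (DxM m) P := by
  unfold dLam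
  rw [lie_eq_lieBracket, lie_eq_lieBracket, lieBracket_const_left, lieBracket_const_left,
    (hasFDerivAt_DxM hP.ne').fderiv, (hasFDerivAt_DyM hP.ne').fderiv]
  have h2m : 2 * m - 1 ≠ 0 := by contrapose! hm; linarith
  have key : m ^ 2 / (2 * m - 1) * ((2 * m - 1) * P 5 ^ (2 * m - 1 - 1)) =
      m * P 5 ^ (m - 1) * (m * P 5 ^ (m - 1)) := by
    rw [show 2 * m - 1 - 1 = (m - 1) + (m - 1) by ring, Real.rpow_add hP, ← mul_assoc,
      div_mul_cancel₀ _ h2m]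
    ring
  ext i
  fin_cases i <;> simp [xiCoeff, key]

theorem lie_dLam_xiM (hP : 0 < P 5) (hm : m ≠ 1 / 2) :
    lie dLam (xiM m) P = (-(m * (m - 1) * P 5 ^ (m - 2))) • DxM m P := by
  rw [lie_xiM_right hP.ne', lie_dLam_DyM hP hm, fderiv_xiCoeff_apply hP.ne']
  simp only [dLam, Matrix.cons_val, mul_one, neg_smul]
  abel

theorem lie_xiM_DxM (hP : P 5 ≠ 0) : lie (xiM m) (DxM m) P = 0 := by
  rw [lie_swap, lie_xiM_right hP, lie_swap, lie_DyM_DxM hP, fderiv_xiCoeff_apply hP]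
  simp [lie, DxM]

theorem lie_xiM_DyM (hP : P 5 ≠ 0) : lie (xiM m) (DyM m) P = 0 := by
  rw [lie_swap, lie_xiM_right hP, lie_DyM_DxM hP, fderiv_xiCoeff_apply hP]
  simp [lie, DyM]

end

/-- On the set {λ > 0} in ℝ⁶, for D_x = ∂_x + p∂_u + λ∂_p + λ^m∂_q and
D_y = ∂_y + q∂_u + λ^m∂_p + (m²/(2m−1))λ^{2m−1}∂_q (m ≠ 1/2) one has
[D_y, D_x] = 0 and [∂_λ, ξ] = −m(m−1)λ^{m−2}·D_x for ξ = D_y − mλ^{m−1}·D_x,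
so ξ is a Cauchy characteristic of the distribution spanned by D_x, D_y, ∂_λ. -/
theorem cauchy_characteristic_submaximal_model (m : ℝ) (hm : m ≠ 1 / 2) :
    ∀ P : Fin 6 → ℝ, P 5 > 0 →
      lie (DyM m) (DxM m) P = 0 ∧
      lie dLam (xiM m) P = (-(m * (m - 1) * (P 5) ^ (m - 2))) • DxM m P ∧
      (∀ Z ∈ ({DxM m, DyM m, dLam} : Set ((Fin 6 → ℝ) → (Fin 6 → ℝ))),
        lie (xiM m) Z P ∈ Submodule.span ℝ {DxM m P, DyM m P, dLam P}) := by
  intro P hP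
  refine ⟨lie_DyM_DxM hP.ne', lie_dLam_xiM hP hm, ?_⟩
  rintro Z (rfl | rfl | rfl)
  · rw [lie_xiM_DxM hP.ne']
    exact zero_mem _
  · rw [lie_xiM_DyM hP.ne']
    exact zero_mem _
  · rw [lie_swap, lie_dLam_xiM hP hm, neg_smul, neg_neg]
    exact Submodule.smul_mem _ _ (Submodule.subset_span (by simp))
end

section
/- Let ψ, φ : J → ℝ be C² functions on an interval J with φ' = (ψ')², and suppose ψ ≥ 0 and ψ'(y) − ψ(y)/(x+y) ≥ 0 on an open set U ⊆ {(x,y) : x + y > 0, y ∈ J}. Then u(x,y) = φ(y) − ψ(y)²/(x+y) satisfies on U: u_x = ψ(y)²/(x+y)² ≥ 0, u_y = (ψ'(y) − ψ(y)/(x+y))² ≥ 0, u_xx = −2u_x/(x+y), and u_xy = 2√(u_x·u_y)/(x+y). -/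
noncomputable def pdx (f : ℝ × ℝ → ℝ) (z : ℝ × ℝ) : ℝ := deriv (fun t => f (t, z.2)) z.1

noncomputable def pdy (f : ℝ × ℝ → ℝ) (z : ℝ × ℝ) : ℝ := deriv (fun t => f (z.1, t)) z.2

/-!
Along horizontal lines `u = φ(y) - ψ(y)² / (x + y)` is an elementary function of `x`, so
`u_x = ψ² / (x + y)²` and `u_xx = -2 u_x / (x + y)`. Differentiating in `y` and using
`φ' = (ψ')²` completes a square: `u_y = (ψ' - ψ / (x + y))²`. Finally
`u_xy = 2 ψ (ψ' - ψ / (x + y)) / (x + y)²`, and the sign conditions on `ψ` and on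
`ψ' - ψ / (x + y)` identify `ψ (ψ' - ψ / (x + y)) / (x + y)` with `√(u_x u_y)`.
-/

open Filter Topology

section PartialDerivatives

variable {f g : ℝ × ℝ → ℝ} {z : ℝ × ℝ}

theorem Filter.EventuallyEq.pdx_eq (h : f =ᶠ[𝓝 z] g) : pdx f z = pdx g z :=
  EventuallyEq.deriv_eq <| h.comp_tendsto <| (Continuous.prodMk_left z.2).tendsto' _ _ rfl

theorem Filter.EventuallyEq.pdy_eq (h : f =ᶠ[𝓝 z] g) : pdy f z = pdy g z :=
  EventuallyEq.deriv_eq <| h.comp_tendsto <| (Continuous.prodMk_right z.1).tendsto' _ _ rfl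

end PartialDerivatives

section ExplicitPartials

variable {z : ℝ × ℝ}

theorem pdx_sub_div_add (f g : ℝ → ℝ) (hz : z.1 + z.2 ≠ 0) :
    pdx (fun w => f w.2 - g w.2 / (w.1 + w.2)) z = g z.2 / (z.1 + z.2) ^ 2 := by
  refine HasDerivAt.deriv <| ((hasDerivAt_const z.1 (f z.2)).fun_sub
    ((hasDerivAt_const z.1 (g z.2)).fun_div ((hasDerivAt_id' z.1).add_const z.2) hz)).congr_deriv ?_
  field_simp
  ring

theorem pdx_sub_div_add_eventuallyEq (f g : ℝ → ℝ) (hz : z.1 + z.2 ≠ 0) :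
    pdx (fun w => f w.2 - g w.2 / (w.1 + w.2)) =ᶠ[𝓝 z] fun w => g w.2 / (w.1 + w.2) ^ 2 := by
  have hopen : IsOpen {w : ℝ × ℝ | w.1 + w.2 ≠ 0} :=
    isOpen_ne_fun (by fun_prop) continuous_const
  filter_upwards [hopen.mem_nhds hz] with w hw using pdx_sub_div_add f g hw

theorem pdx_div_add_sq (g : ℝ → ℝ) (hz : z.1 + z.2 ≠ 0) :
    pdx (fun w => g w.2 / (w.1 + w.2) ^ 2) z = -2 * (g z.2 / (z.1 + z.2) ^ 2) / (z.1 + z.2) := by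
  refine HasDerivAt.deriv <| ((hasDerivAt_const z.1 (g z.2)).fun_div
    (((hasDerivAt_id' z.1).add_const z.2).fun_pow 2) (pow_ne_zero 2 hz)).congr_deriv ?_
  field_simp
  ring

theorem pdy_sub_div_add {f g : ℝ → ℝ} {f' g' : ℝ} (hf : HasDerivAt f f' z.2)
    (hg : HasDerivAt g g' z.2) (hz : z.1 + z.2 ≠ 0) :
    pdy (fun w => f w.2 - g w.2 / (w.1 + w.2)) z
      = f' - (g' * (z.1 + z.2) - g z.2) / (z.1 + z.2) ^ 2 := by
  refine HasDerivAt.deriv <|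
    (hf.fun_sub (hg.fun_div ((hasDerivAt_id' z.2).const_add z.1) hz)).congr_deriv ?_
  ring

theorem pdy_div_add_sq {g : ℝ → ℝ} {g' : ℝ} (hg : HasDerivAt g g' z.2) (hz : z.1 + z.2 ≠ 0) :
    pdy (fun w => g w.2 / (w.1 + w.2) ^ 2) z
      = (g' * (z.1 + z.2) - 2 * g z.2) / (z.1 + z.2) ^ 3 := by
  refine HasDerivAt.deriv <|
    (hg.fun_div (((hasDerivAt_id' z.2).const_add z.1).fun_pow 2) (pow_ne_zero 2 hz)).congr_deriv ?_
  field_simp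
  ring

end ExplicitPartials

theorem closed_form_solution_general (J : Set ℝ) (hJ : IsOpen J)
    (ψ φ : ℝ → ℝ) (hψ : ContDiffOn ℝ 2 ψ J) (hφ : ContDiffOn ℝ 2 φ J)
    (hc : ∀ y ∈ J, deriv φ y = (deriv ψ y) ^ 2)
    (U : Set (ℝ × ℝ))
    (hU : ∀ z ∈ U, 0 < z.1 + z.2 ∧ z.2 ∈ J)
    (hψpos : ∀ z ∈ U, 0 ≤ ψ z.2)
    (hq : ∀ z ∈ U, 0 ≤ deriv ψ z.2 - ψ z.2 / (z.1 + z.2)) :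
    ∀ z ∈ U,
      (pdx (fun w => φ w.2 - (ψ w.2) ^ 2 / (w.1 + w.2)) z
          = (ψ z.2) ^ 2 / (z.1 + z.2) ^ 2 ∧
        0 ≤ pdx (fun w => φ w.2 - (ψ w.2) ^ 2 / (w.1 + w.2)) z) ∧
      (pdy (fun w => φ w.2 - (ψ w.2) ^ 2 / (w.1 + w.2)) z
          = (deriv ψ z.2 - ψ z.2 / (z.1 + z.2)) ^ 2 ∧
        0 ≤ pdy (fun w => φ w.2 - (ψ w.2) ^ 2 / (w.1 + w.2)) z) ∧
      pdx (pdx (fun w => φ w.2 - (ψ w.2) ^ 2 / (w.1 + w.2))) z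
        = -2 * pdx (fun w => φ w.2 - (ψ w.2) ^ 2 / (w.1 + w.2)) z / (z.1 + z.2) ∧
      pdy (pdx (fun w => φ w.2 - (ψ w.2) ^ 2 / (w.1 + w.2))) z
        = 2 * Real.sqrt (pdx (fun w => φ w.2 - (ψ w.2) ^ 2 / (w.1 + w.2)) z *
            pdy (fun w => φ w.2 - (ψ w.2) ^ 2 / (w.1 + w.2)) z) / (z.1 + z.2) := by
  intro z hz
  obtain ⟨hs, hyJ⟩ := hU z hz
  have hne : z.1 + z.2 ≠ 0 := hs.ne'
  have hψd : HasDerivAt ψ (deriv ψ z.2) z.2 :=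
    ((hψ.differentiableOn two_ne_zero).differentiableAt (hJ.mem_nhds hyJ)).hasDerivAt
  have hφd : HasDerivAt φ (deriv φ z.2) z.2 :=
    ((hφ.differentiableOn two_ne_zero).differentiableAt (hJ.mem_nhds hyJ)).hasDerivAt
  have hψsq : HasDerivAt (fun y => ψ y ^ 2) (2 * ψ z.2 * deriv ψ z.2) z.2 := by
    simpa using hψd.fun_pow 2
  have hux := pdx_sub_div_add φ (fun y => ψ y ^ 2) hne
  have huy : pdy (fun w => φ w.2 - (ψ w.2) ^ 2 / (w.1 + w.2)) z
      = (deriv ψ z.2 - ψ z.2 / (z.1 + z.2)) ^ 2 := by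
    rw [pdy_sub_div_add hφd hψsq hne, hc z.2 hyJ]
    field_simp
    ring
  have hux_eq := pdx_sub_div_add_eventuallyEq φ (fun y => ψ y ^ 2) hne
  have hsqrt : Real.sqrt (ψ z.2 ^ 2 / (z.1 + z.2) ^ 2 * (deriv ψ z.2 - ψ z.2 / (z.1 + z.2)) ^ 2)
      = ψ z.2 / (z.1 + z.2) * (deriv ψ z.2 - ψ z.2 / (z.1 + z.2)) := by
    rw [← div_pow, ← mul_pow]
    exact Real.sqrt_sq (mul_nonneg (div_nonneg (hψpos z hz) hs.le) (hq z hz))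
  refine ⟨⟨hux, hux ▸ by positivity⟩, ⟨huy, huy ▸ sq_nonneg _⟩, ?_, ?_⟩
  · rw [hux_eq.pdx_eq, pdx_div_add_sq (fun y => ψ y ^ 2) hne, hux]
  · rw [hux_eq.pdy_eq, pdy_div_add_sq hψsq hne, hux, huy, hsqrt]
    field_simp

/-- Closed-form solutions: if φ' = (ψ')² on J and ψ ≥ 0, ψ'(y) − ψ(y)/(x+y) ≥ 0 on
an open U ⊆ {x+y>0, y ∈ J}, then u(x,y) = φ(y) − ψ(y)²/(x+y) satisfies
u_x = ψ²/(x+y)² ≥ 0, u_y = (ψ' − ψ/(x+y))² ≥ 0, u_xx = −2u_x/(x+y) and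
u_xy = 2√(u_x·u_y)/(x+y). -/
theorem closed_form_solution (J : Set ℝ) (hJ : IsOpen J)
    (ψ φ : ℝ → ℝ) (hψ : ContDiffOn ℝ 2 ψ J) (hφ : ContDiffOn ℝ 2 φ J)
    (hc : ∀ y ∈ J, deriv φ y = (deriv ψ y) ^ 2)
    (U : Set (ℝ × ℝ)) (hUopen : IsOpen U)
    (hU : ∀ z ∈ U, 0 < z.1 + z.2 ∧ z.2 ∈ J)
    (hψpos : ∀ z ∈ U, 0 ≤ ψ z.2)
    (hq : ∀ z ∈ U, 0 ≤ deriv ψ z.2 - ψ z.2 / (z.1 + z.2)) :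
    ∀ z ∈ U,
      (pdx (fun w => φ w.2 - (ψ w.2) ^ 2 / (w.1 + w.2)) z
          = (ψ z.2) ^ 2 / (z.1 + z.2) ^ 2 ∧
        0 ≤ pdx (fun w => φ w.2 - (ψ w.2) ^ 2 / (w.1 + w.2)) z) ∧
      (pdy (fun w => φ w.2 - (ψ w.2) ^ 2 / (w.1 + w.2)) z
          = (deriv ψ z.2 - ψ z.2 / (z.1 + z.2)) ^ 2 ∧
        0 ≤ pdy (fun w => φ w.2 - (ψ w.2) ^ 2 / (w.1 + w.2)) z) ∧
      pdx (pdx (fun w => φ w.2 - (ψ w.2) ^ 2 / (w.1 + w.2))) z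
        = -2 * pdx (fun w => φ w.2 - (ψ w.2) ^ 2 / (w.1 + w.2)) z / (z.1 + z.2) ∧
      pdy (pdx (fun w => φ w.2 - (ψ w.2) ^ 2 / (w.1 + w.2))) z
        = 2 * Real.sqrt (pdx (fun w => φ w.2 - (ψ w.2) ^ 2 / (w.1 + w.2)) z *
            pdy (fun w => φ w.2 - (ψ w.2) ^ 2 / (w.1 + w.2)) z) / (z.1 + z.2) :=
  closed_form_solution_general J hJ ψ φ hψ hφ hc U hU hψpos hq
end

section
/- Let λ : U → ℝ be a C² function on an open set U ⊆ ℝ² satisfying λ_y = λ·λ_x. Let u be a C⁴ solution of u_xx = λ, u_xy = λ²/2, u_yy = λ³/3 on U. Define w = −2u + 2y·u_y + 2x·u_x − x²λ − xyλ² − (1/3)y²λ³. Then w is constant along the characteristic vector field ∂_y − λ∂_x, i.e., (∂_y − λ∂_x)(w) = w_y − λ·w_x = 0 holds identically on U. -/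
open Filter Topology

lemma hasDerivAt_line_x {f : ℝ × ℝ → ℝ} {a b : ℝ} (hf : DifferentiableAt ℝ f (a, b)) :
    HasDerivAt (fun t => f (t, b)) (pdx f (a, b)) a := by
  have hline : HasDerivAt (fun t : ℝ => (t, b)) ((1 : ℝ), (0 : ℝ)) a :=
    (hasDerivAt_id a).prodMk (hasDerivAt_const a b)
  have h := hf.hasFDerivAt.comp_hasDerivAt a hline
  have hd : pdx f (a, b) = fderiv ℝ f (a, b) ((1 : ℝ), (0 : ℝ)) := h.deriv
  rw [hd]; exact h

lemma hasDerivAt_line_y {f : ℝ × ℝ → ℝ} {a b : ℝ} (hf : DifferentiableAt ℝ f (a, b)) :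
    HasDerivAt (fun t => f (a, t)) (pdy f (a, b)) b := by
  have hline : HasDerivAt (fun t : ℝ => (a, t)) ((0 : ℝ), (1 : ℝ)) b :=
    (hasDerivAt_const b a).prodMk (hasDerivAt_id b)
  have h := hf.hasFDerivAt.comp_hasDerivAt b hline
  have hd : pdy f (a, b) = fderiv ℝ f (a, b) ((0 : ℝ), (1 : ℝ)) := h.deriv
  rw [hd]; exact h

lemma pdx_eq_fderiv {f : ℝ × ℝ → ℝ} {z : ℝ × ℝ} (hf : DifferentiableAt ℝ f z) :
    pdx f z = fderiv ℝ f z ((1 : ℝ), (0 : ℝ)) := by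
  obtain ⟨a, b⟩ := z
  have hline : HasDerivAt (fun t : ℝ => (t, b)) ((1 : ℝ), (0 : ℝ)) a :=
    (hasDerivAt_id a).prodMk (hasDerivAt_const a b)
  exact (hf.hasFDerivAt.comp_hasDerivAt a hline).deriv

lemma pdy_eq_fderiv {f : ℝ × ℝ → ℝ} {z : ℝ × ℝ} (hf : DifferentiableAt ℝ f z) :
    pdy f z = fderiv ℝ f z ((0 : ℝ), (1 : ℝ)) := by
  obtain ⟨a, b⟩ := z
  have hline : HasDerivAt (fun t : ℝ => (a, t)) ((0 : ℝ), (1 : ℝ)) b :=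
    (hasDerivAt_const b a).prodMk (hasDerivAt_id b)
  exact (hf.hasFDerivAt.comp_hasDerivAt b hline).deriv

lemma pdx_congr {f g : ℝ × ℝ → ℝ} {z : ℝ × ℝ} (h : f =ᶠ[𝓝 z] g) : pdx f z = pdx g z := by
  unfold pdx
  apply Filter.EventuallyEq.deriv_eq
  have hc : ContinuousAt (fun t : ℝ => (t, z.2)) z.1 := by fun_prop
  have : (fun t : ℝ => (t, z.2)) z.1 = z := by simp
  exact h.comp_tendsto (this ▸ hc)

lemma pdy_congr {f g : ℝ × ℝ → ℝ} {z : ℝ × ℝ} (h : f =ᶠ[𝓝 z] g) : pdy f z = pdy g z := by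
  unfold pdy
  apply Filter.EventuallyEq.deriv_eq
  have hc : ContinuousAt (fun t : ℝ => (z.1, t)) z.2 := by fun_prop
  have : (fun t : ℝ => (z.1, t)) z.2 = z := by simp
  exact h.comp_tendsto (this ▸ hc)

/-- For a solution u of Cartan's system u_xx = λ, u_xy = λ²/2, u_yy = λ³/3 (with
λ_y = λ·λ_x), the invariant w = −2u + 2y·u_y + 2x·u_x − x²λ − xyλ² − (1/3)y²λ³ is
constant along the characteristic field ∂_y − λ∂_x: (∂_y − λ∂_x)(w) = 0. -/
theorem invariant_along_characteristic (U : Set (ℝ × ℝ)) (hU : IsOpen U)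
    (l : ℝ × ℝ → ℝ) (hl : ContDiffOn ℝ 2 l U)
    (hlpde : ∀ z ∈ U, pdy l z = l z * pdx l z)
    (u : ℝ × ℝ → ℝ) (hu : ContDiffOn ℝ 4 u U)
    (hxx : ∀ z ∈ U, pdx (pdx u) z = l z)
    (hxy : ∀ z ∈ U, pdy (pdx u) z = (l z) ^ 2 / 2)
    (hyy : ∀ z ∈ U, pdy (pdy u) z = (l z) ^ 3 / 3) :
    ∀ z ∈ U,
      pdy (fun w => -2 * u w + 2 * w.2 * pdy u w + 2 * w.1 * pdx u w
          - w.1 ^ 2 * l w - w.1 * w.2 * (l w) ^ 2 - (1 / 3) * w.2 ^ 2 * (l w) ^ 3) z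
        - l z * pdx (fun w => -2 * u w + 2 * w.2 * pdy u w + 2 * w.1 * pdx u w
          - w.1 ^ 2 * l w - w.1 * w.2 * (l w) ^ 2 - (1 / 3) * w.2 ^ 2 * (l w) ^ 3) z = 0 := by
  intro z hz
  obtain ⟨a, b⟩ := z
  have hzU : (a, b) ∈ U := hz
  have hnz : U ∈ 𝓝 (a, b) := hU.mem_nhds hzU
  have hlA : ContDiffAt ℝ 2 l (a, b) := hl.contDiffAt hnz
  have huA : ContDiffAt ℝ 4 u (a, b) := hu.contDiffAt hnz
  have hld : DifferentiableAt ℝ l (a, b) := hlA.differentiableAt (by norm_num)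
  have hud : DifferentiableAt ℝ u (a, b) := huA.differentiableAt (by norm_num)
  have hF : ContDiffAt ℝ 3 (fderiv ℝ u) (a, b) := huA.fderiv_right (by norm_num)
  have hFd : DifferentiableAt ℝ (fderiv ℝ u) (a, b) := hF.differentiableAt (by norm_num)
  have hux : pdx u =ᶠ[𝓝 (a, b)] fun w => fderiv ℝ u w ((1 : ℝ), (0 : ℝ)) := by
    filter_upwards [hnz] with w hw
    exact pdx_eq_fderiv ((hu.contDiffAt (hU.mem_nhds hw)).differentiableAt (by norm_num))
  have huy : pdy u =ᶠ[𝓝 (a, b)] fun w => fderiv ℝ u w ((0 : ℝ), (1 : ℝ)) := by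
    filter_upwards [hnz] with w hw
    exact pdy_eq_fderiv ((hu.contDiffAt (hU.mem_nhds hw)).differentiableAt (by norm_num))
  have hFx : DifferentiableAt ℝ (fun w => fderiv ℝ u w ((1 : ℝ), (0 : ℝ))) (a, b) :=
    hFd.clm_apply (differentiableAt_const _)
  have hFy : DifferentiableAt ℝ (fun w => fderiv ℝ u w ((0 : ℝ), (1 : ℝ))) (a, b) :=
    hFd.clm_apply (differentiableAt_const _)
  have hpxd : DifferentiableAt ℝ (pdx u) (a, b) := hux.differentiableAt_iff.mpr hFx
  have hpyd : DifferentiableAt ℝ (pdy u) (a, b) := huy.differentiableAt_iff.mpr hFy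
  have key : ∀ v w : ℝ × ℝ, fderiv ℝ (fun p => fderiv ℝ u p v) (a, b) w
      = fderiv ℝ (fderiv ℝ u) (a, b) w v := by
    intro v w
    rw [fderiv_clm_apply hFd (differentiableAt_const v)]
    simp
  have hsym : IsSymmSndFDerivAt ℝ u (a, b) := huA.isSymmSndFDerivAt (by norm_num)
  have hpxy : pdx (pdy u) (a, b) = pdy (pdx u) (a, b) := by
    rw [pdx_congr huy, pdy_congr hux, pdx_eq_fderiv hFy, pdy_eq_fderiv hFx, key, key]
    exact hsym _ _
  have hB : pdx (pdy u) (a, b) = l (a, b) ^ 2 / 2 := hpxy.trans (hxy _ hzU)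
  have HX : HasDerivAt (fun t : ℝ => -2 * u (t, b) + 2 * b * pdy u (t, b) + 2 * t * pdx u (t, b)
        - t ^ 2 * l (t, b) - t * b * l (t, b) ^ 2 - 1 / 3 * b ^ 2 * l (t, b) ^ 3)
      (-(pdx l (a, b) * (a + b * l (a, b)) ^ 2)) a := by
    have h1 := (hasDerivAt_line_x hud).const_mul (-2 : ℝ)
    have h2 := (hasDerivAt_line_x hpyd).const_mul (2 * b)
    have h3 := ((hasDerivAt_id a).const_mul (2 : ℝ)).mul (hasDerivAt_line_x hpxd)
    have h4 := (hasDerivAt_pow 2 a).mul (hasDerivAt_line_x hld)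
    have h5 := ((hasDerivAt_id a).mul_const b).mul ((hasDerivAt_line_x hld).pow 2)
    have h6 := ((hasDerivAt_line_x hld).pow 3).const_mul (1 / 3 * b ^ 2)
    refine (((((h1.add h2).add h3).sub h4).sub h5).sub h6).congr_deriv ?_
    rw [hxx _ hzU, hB]
    simp only [id_eq, Pi.pow_apply]
    push_cast
    ring
  have HY : HasDerivAt (fun t : ℝ => -2 * u (a, t) + 2 * t * pdy u (a, t) + 2 * a * pdx u (a, t)
        - a ^ 2 * l (a, t) - a * t * l (a, t) ^ 2 - 1 / 3 * t ^ 2 * l (a, t) ^ 3)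
      (-(l (a, b) * pdx l (a, b) * (a + b * l (a, b)) ^ 2)) b := by
    have g1 := (hasDerivAt_line_y hud).const_mul (-2 : ℝ)
    have g2 := ((hasDerivAt_id b).const_mul (2 : ℝ)).mul (hasDerivAt_line_y hpyd)
    have g3 := (hasDerivAt_line_y hpxd).const_mul (2 * a)
    have g4 := (hasDerivAt_line_y hld).const_mul (a ^ 2)
    have g5 := ((hasDerivAt_id b).const_mul a).mul ((hasDerivAt_line_y hld).pow 2)
    have g6 := ((hasDerivAt_pow 2 b).const_mul (1 / 3)).mul ((hasDerivAt_line_y hld).pow 3)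
    refine (((((g1.add g2).add g3).sub g4).sub g5).sub g6).congr_deriv ?_
    rw [hyy _ hzU, hxy _ hzU, hlpde _ hzU]
    simp only [id_eq, Pi.pow_apply]
    push_cast
    ring
  show deriv (fun t : ℝ => -2 * u (a, t) + 2 * t * pdy u (a, t) + 2 * a * pdx u (a, t)
        - a ^ 2 * l (a, t) - a * t * l (a, t) ^ 2 - 1 / 3 * t ^ 2 * l (a, t) ^ 3) b
      - l (a, b) * deriv (fun t : ℝ => -2 * u (t, b) + 2 * b * pdy u (t, b) + 2 * t * pdx u (t, b)
        - t ^ 2 * l (t, b) - t * b * l (t, b) ^ 2 - 1 / 3 * b ^ 2 * l (t, b) ^ 3) a = 0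
  rw [HX.deriv, HY.deriv]
  ring
end
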